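/- arXiv:1008.0288 — 6 statements merged into one kernel-verified Lean document; each statement's English description precedes it below -/
import Mathlib

section
/- Let K be a densely defined operator on a Banach space E with ρ(K) ≠ ∅, let F be a Banach space with [D(K)] ↪ F ↪ E densely, and suppose the operator matrix 𝐊 := [[0, I_F],[K, 0]] with domain D(K) × F generates a strongly continuous semigroup (T(t)) on F × E. Then the upper-left entry C(t) of T(t) (i.e., the compression of T(t) to the first coordinate, mapping f ∈ F ⊂ E to the first component of T(t)(f,0)), extended evenly to ℝ, satisfies C(t+s)+C(t-s)=2C(t)C(s) and C(0)=I on E. -/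
/-!
Let `R (f, e) = (f, -e)`. Since `R 𝐊 = -𝐊 R`, the function `s ↦ T s (R (T s p))` has zero right
derivative for `p ∈ D(𝐊)`, so `T t R T t = R` for `t ≥ 0` by density. Hence `T t R T s` is
`T (t - s) R` or `R T (s - t)`, and applying `T t` to `T s (f, 0) + R (T s (f, 0)) = 2 (C s f, 0)`
gives `C (t + s) + C |t - s| = 2 C t C s` for `t, s ≥ 0`; evenness of `C` does the rest.
-/

open Set Filter Topology

structure IsStronglyContinuousSemigroup {X : Type*} [NormedAddCommGroup X] [NormedSpace ℝ X]
    (T : ℝ → X →L[ℝ] X) : Prop where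
  map_zero : T 0 = 1
  map_add : ∀ t s : ℝ, 0 ≤ t → 0 ≤ s → T (t + s) = T t ∘L T s
  continuousOn : ∀ x : X, ContinuousOn (fun t => T t x) (Ici 0)

theorem hasDerivWithinAt_Ici_of_comp_const_add {X : Type*} [NormedAddCommGroup X]
    [NormedSpace ℝ X] {f : ℝ → X} {f' : X} {x : ℝ}
    (h : HasDerivWithinAt (fun k => f (x + k)) f' (Ici 0) 0) :
    HasDerivWithinAt f f' (Ici x) x := by
  have hsub : HasDerivWithinAt (fun s : ℝ => s - x) 1 (Ici x) x :=
    (hasDerivWithinAt_id x _).sub_const x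
  have := h.scomp_of_eq x hsub (fun _ hs => mem_Ici.2 (sub_nonneg.2 hs)) (sub_self x).symm
  simpa [Function.comp_def] using this

namespace IsStronglyContinuousSemigroup

variable {X : Type*} [NormedAddCommGroup X] [NormedSpace ℝ X] {T : ℝ → X →L[ℝ] X}

theorem apply_apply (hT : IsStronglyContinuousSemigroup T) {t s : ℝ} (ht : 0 ≤ t) (hs : 0 ≤ s)
    (x : X) : T t (T s x) = T (t + s) x := by
  rw [hT.map_add t s ht hs, ContinuousLinearMap.comp_apply]

theorem apply_zero (hT : IsStronglyContinuousSemigroup T) (x : X) : T 0 x = x := by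
  simp [hT.map_zero]

theorem exists_norm_le [CompleteSpace X] (hT : IsStronglyContinuousSemigroup T) (b : ℝ) :
    ∃ M, ∀ t ∈ Icc 0 b, ‖T t‖ ≤ M := by
  obtain ⟨M, hM⟩ := banach_steinhaus (g := fun t : Icc (0 : ℝ) b => T t) fun x =>
    (isCompact_Icc.exists_bound_of_continuousOn ((hT.continuousOn x).mono Icc_subset_Ici_self)).imp
      fun _ h t => h t t.2
  exact ⟨M, fun t ht => hM ⟨t, ht⟩⟩

theorem tendsto_apply [CompleteSpace X] (hT : IsStronglyContinuousSemigroup T) {t₀ : ℝ}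
    (ht₀ : 0 ≤ t₀) {l : Filter ℝ} (hl : l ≤ 𝓝[Ici 0] t₀) {y : ℝ → X} {y₀ : X}
    (hy : Tendsto y l (𝓝 y₀)) : Tendsto (fun t => T t (y t)) l (𝓝 (T t₀ y₀)) := by
  obtain ⟨M, hM⟩ := hT.exists_norm_le (t₀ + 1)
  have hnear : Icc 0 (t₀ + 1) ∈ l := hl <|
    mem_of_superset (inter_mem_nhdsWithin _ (Iio_mem_nhds (lt_add_one t₀)))
      fun _ ht => ⟨ht.1, ht.2.le⟩
  have hsmall : Tendsto (fun t => T t (y t - y₀)) l (𝓝 0) := by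
    refine squeeze_zero_norm' ?_ (by simpa using (tendsto_sub_nhds_zero_iff.2 hy).norm.const_mul M)
    filter_upwards [hnear] with t ht
    exact (T t).le_of_opNorm_le (hM t ht) _
  simpa using hsmall.add ((hT.continuousOn y₀ t₀ ht₀).mono_left hl)

theorem continuousOn_apply [CompleteSpace X] (hT : IsStronglyContinuousSemigroup T) {g : ℝ → X}
    (hg : ContinuousOn g (Ici 0)) : ContinuousOn (fun t => T t (g t)) (Ici 0) :=
  fun t₀ ht₀ => hT.tendsto_apply ht₀ le_rfl (hg t₀ ht₀)

theorem hasDerivWithinAt_apply [CompleteSpace X] (hT : IsStronglyContinuousSemigroup T)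
    {f : ℝ → X} {d e : X} (hf : HasDerivWithinAt f d (Ici 0) 0)
    (he : HasDerivWithinAt (fun t => T t (f 0)) e (Ici 0) 0) :
    HasDerivWithinAt (fun t => T t (f t)) (e + d) (Ici 0) 0 := by
  rw [hasDerivWithinAt_iff_tendsto_slope] at hf he ⊢
  have hTd : Tendsto (fun t => T t (slope f 0 t)) (𝓝[Ici 0 \ {0}] 0) (𝓝 (T 0 d)) :=
    hT.tendsto_apply le_rfl (nhdsWithin_mono _ sdiff_subset) hf
  rw [hT.map_zero] at hTd
  refine (he.add hTd).congr fun t => ?_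
  simp only [slope_def_module, hT.apply_zero, map_smul, map_sub, sub_zero, smul_sub]
  abel

theorem hasDerivWithinAt_apply_apply (hT : IsStronglyContinuousSemigroup T) {x : ℝ}
    (hx : 0 ≤ x) {p d : X} (hp : HasDerivWithinAt (fun t => T t p) d (Ici 0) 0) :
    HasDerivWithinAt (fun t => T t (T x p)) (T x d) (Ici 0) 0 := by
  refine ((T x).hasFDerivAt.comp_hasDerivWithinAt 0 hp).congr (fun t ht => ?_) ?_
  · simp only [Function.comp_apply, hT.apply_apply hx ht, hT.apply_apply ht hx, add_comm]
  · simp [hT.apply_zero]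

/-- `hR` says `R A ⊆ -A R` for the generator `A` of `T`. -/
theorem apply_apply_eq_of_anticommute [CompleteSpace X] (hT : IsStronglyContinuousSemigroup T)
    {R : X →L[ℝ] X} (hR : ∀ p d, HasDerivWithinAt (fun t => T t p) d (Ici 0) 0 →
      HasDerivWithinAt (fun t => T t (R p)) (-R d) (Ici 0) 0)
    {p d : X} (hp : HasDerivWithinAt (fun t => T t p) d (Ici 0) 0) {t : ℝ} (ht : 0 ≤ t) :
    T t (R (T t p)) = R p := by
  have hderiv : ∀ x ∈ Ico 0 t, HasDerivWithinAt (fun s => T s (R (T s p))) 0 (Ici x) x := by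
    rintro x ⟨hx, -⟩
    -- shift to `x` and differentiate at `0` along the orbit of `T x p`
    have hq := hT.hasDerivWithinAt_apply_apply hx hp
    have hzero : HasDerivWithinAt (fun k => T k (R (T k (T x p)))) 0 (Ici 0) 0 := by
      have hRq : HasDerivWithinAt (fun k => T k (R (T 0 (T x p)))) (-R (T x d)) (Ici 0) 0 := by
        simpa only [hT.apply_zero] using hR _ _ hq
      simpa only [neg_add_cancel, Function.comp_apply] using
        hT.hasDerivWithinAt_apply (R.hasFDerivAt.comp_hasDerivWithinAt 0 hq) hRq
    have hshift := (T x).hasFDerivAt.comp_hasDerivWithinAt 0 hzero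
    rw [(T x).map_zero] at hshift
    refine hasDerivWithinAt_Ici_of_comp_const_add (hshift.congr (fun k hk => ?_) ?_)
    · simp only [Function.comp_apply, hT.apply_apply hx hk, hT.apply_apply hk hx, add_comm k x]
    · simp [hT.apply_zero]
  have hcont : ContinuousOn (fun s => T s (R (T s p))) (Icc 0 t) :=
    (hT.continuousOn_apply (R.continuous.comp_continuousOn (hT.continuousOn p))).mono
      Icc_subset_Ici_self
  simpa [hT.apply_zero] using
    constant_of_has_deriv_right_zero hcont hderiv t (right_mem_Icc.2 ht)

theorem apply_apply_eq_of_anticommute_of_dense [CompleteSpace X]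
    (hT : IsStronglyContinuousSemigroup T) {R : X →L[ℝ] X}
    (hR : ∀ p d, HasDerivWithinAt (fun t => T t p) d (Ici 0) 0 →
      HasDerivWithinAt (fun t => T t (R p)) (-R d) (Ici 0) 0)
    (hdom : Dense {p : X | ∃ d, HasDerivWithinAt (fun t => T t p) d (Ici 0) 0})
    {t : ℝ} (ht : 0 ≤ t) (p : X) : T t (R (T t p)) = R p := by
  refine congrFun (Continuous.ext_on hdom (T t ∘L R ∘L T t).continuous R.continuous ?_) p
  rintro q ⟨d, hq⟩
  exact hT.apply_apply_eq_of_anticommute hR hq ht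

theorem apply_apply_eq_of_le (hT : IsStronglyContinuousSemigroup T) {R : X →L[ℝ] X}
    (hRT : ∀ t, 0 ≤ t → ∀ p, T t (R (T t p)) = R p) {s t : ℝ} (hs : 0 ≤ s) (hst : s ≤ t)
    (p : X) : T t (R (T s p)) = T (t - s) (R p) := by
  rw [← hRT s hs p, hT.apply_apply (sub_nonneg.2 hst) hs, sub_add_cancel]

theorem apply_apply_eq_of_ge (hT : IsStronglyContinuousSemigroup T) {R : X →L[ℝ] X}
    (hRT : ∀ t, 0 ≤ t → ∀ p, T t (R (T t p)) = R p) {s t : ℝ} (ht : 0 ≤ t) (hts : t ≤ s)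
    (p : X) : T t (R (T s p)) = R (T (s - t) p) := by
  rw [← hRT t ht (T (s - t) p), hT.apply_apply ht (sub_nonneg.2 hts), add_sub_cancel]

end IsStronglyContinuousSemigroup

theorem Function.Even.comp_abs {M : Type*} {f : ℝ → M} (hf : Function.Even f) (t : ℝ) :
    f |t| = f t := by
  rcases abs_choice t with h | h <;> simp [h, hf t]

theorem Function.Even.add_sub_eq_abs_add_abs_sub {M : Type*} [AddCommMagma M] {f : ℝ → M}
    (hf : Function.Even f) (t s : ℝ) :
    f (t + s) + f (t - s) = f (|t| + |s|) + f (|t| - |s|) := by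
  have hneg_left : ∀ a b : ℝ, f (-a + b) + f (-a - b) = f (a + b) + f (a - b) := fun a b => by
    rw [show -a + b = -(a - b) by ring, show -a - b = -(a + b) by ring, hf, hf, add_comm]
  have hneg_right : ∀ a b : ℝ, f (a + -b) + f (a - -b) = f (a + b) + f (a - b) := fun a b => by
    rw [← sub_eq_add_neg, sub_neg_eq_add, add_comm]
  rcases abs_choice t with ht | ht <;> rcases abs_choice s with hs | hs <;>
    simp only [ht, hs, hneg_left, hneg_right]

section ReductionMatrix

variable {F E : Type*} [NormedAddCommGroup F] [NormedSpace ℝ F]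
  [NormedAddCommGroup E] [NormedSpace ℝ E]

variable (F E) in
def negSnd : (F × E) →L[ℝ] (F × E) :=
  (ContinuousLinearMap.id ℝ F).prodMap (-ContinuousLinearMap.id ℝ E)

@[simp]
theorem negSnd_apply (p : F × E) : negSnd F E p = (p.1, -p.2) := rfl

theorem hasDerivWithinAt_negSnd_of_reduction (i : F →L[ℝ] E) {DK : Submodule ℝ F}
    {K : DK →ₗ[ℝ] E} {T : ℝ → (F × E) →L[ℝ] (F × E)}
    (hgen : ∀ (u : DK) (v : F),
      HasDerivWithinAt (fun t => T t ((u : F), i v)) ((v : F), K u) (Ici 0) 0)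
    (hmax : ∀ (p d : F × E), HasDerivWithinAt (fun t => T t p) d (Ici 0) 0 →
      ∃ (u : DK) (v : F), p = ((u : F), i v))
    (p d : F × E) (hp : HasDerivWithinAt (fun t => T t p) d (Ici 0) 0) :
    HasDerivWithinAt (fun t => T t (negSnd F E p)) (-negSnd F E d) (Ici 0) 0 := by
  obtain ⟨u, v, rfl⟩ := hmax p d hp
  obtain rfl := (uniqueDiffWithinAt_Ici 0).eq_deriv _ hp (hgen u v)
  simpa using hgen u (-v)

theorem fst_apply_negSnd_apply {T : ℝ → (F × E) →L[ℝ] (F × E)}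
    (hT : IsStronglyContinuousSemigroup T)
    (hRT : ∀ t, 0 ≤ t → ∀ p, T t (negSnd F E (T t p)) = negSnd F E p)
    {t s : ℝ} (ht : 0 ≤ t) (hs : 0 ≤ s) (f : F) :
    (T t (negSnd F E (T s (f, 0)))).1 = (T |t - s| (f, 0)).1 := by
  rcases le_total s t with hst | hts
  · rw [hT.apply_apply_eq_of_le hRT hs hst, abs_of_nonneg (sub_nonneg.2 hst)]
    simp
  · rw [hT.apply_apply_eq_of_ge hRT ht hts, abs_sub_comm, abs_of_nonneg (sub_nonneg.2 hts)]
    simp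

theorem cosine_eq_of_nonneg (i : F →L[ℝ] E) (hdense : DenseRange i)
    {T : ℝ → (F × E) →L[ℝ] (F × E)} (hT : IsStronglyContinuousSemigroup T)
    (hRT : ∀ t, 0 ≤ t → ∀ p, T t (negSnd F E (T t p)) = negSnd F E p)
    {C : ℝ → E →L[ℝ] E} (hCdef : ∀ t : ℝ, 0 ≤ t → ∀ f : F, C t (i f) = i (T t (f, 0)).1)
    (hCeven : Function.Even C) {t s : ℝ} (ht : 0 ≤ t) (hs : 0 ≤ s) :
    C (t + s) + C (t - s) = 2 • (C t ∘L C s) := by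
  refine DFunLike.coe_injective <|
    hdense.equalizer (map_continuous _) (map_continuous _) <| funext fun f => ?_
  have hq : T s (f, 0) + negSnd F E (T s (f, 0)) = (2 : ℝ) • ((T s (f, 0)).1, 0) := by
    ext <;> simp [two_smul]
  simp only [Function.comp_apply, add_apply, smul_apply, ContinuousLinearMap.comp_apply]
  rw [← hCeven.comp_abs (t - s), hCdef _ (add_nonneg ht hs), hCdef _ (abs_nonneg _), hCdef s hs,
    hCdef t ht, ← fst_apply_negSnd_apply hT hRT ht hs, ← hT.apply_apply ht hs, ← map_add,
    ← Prod.fst_add, ← map_add, hq, map_smul, Prod.smul_fst, map_smul, ofNat_smul_eq_nsmul]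

end ReductionMatrix

theorem compression_of_reduction_semigroup_is_cosine_general
    {E F : Type*}
    [NormedAddCommGroup E] [NormedSpace ℝ E] [CompleteSpace E]
    [NormedAddCommGroup F] [NormedSpace ℝ F] [CompleteSpace F]
    -- continuous dense embedding F ↪ E
    (i : F →L[ℝ] E) (hdense : DenseRange i)
    -- the domain D(K) ⊂ F, densely embedded in F, and the operator K : D(K) → E
    (DK : Submodule ℝ F) (hDK : Dense (DK : Set F))
    (K : DK →ₗ[ℝ] E)
    -- T is a strongly continuous semigroup on F × E …
    (T : ℝ → (F × E) →L[ℝ] (F × E))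
    (hT0 : T 0 = 1)
    (hTadd : ∀ t s : ℝ, 0 ≤ t → 0 ≤ s → T (t + s) = T t ∘L T s)
    (hTcont : ∀ p : F × E, ContinuousOn (fun t => T t p) (Ici 0))
    -- … generated by the operator matrix 𝐊(u,v) = (v, Ku) with domain D(K) × F :
    (hgen : ∀ (u : DK) (v : F),
      HasDerivWithinAt (fun t => T t ((u : F), i v)) ((v : F), K u) (Ici 0) 0)
    (hmax : ∀ (p d : F × E), HasDerivWithinAt (fun t => T t p) d (Ici 0) 0 →
      ∃ (u : DK) (v : F), p = ((u : F), i v))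
    -- C is the even extension of the compression of T(t) to the first coordinate
    (C : ℝ → E →L[ℝ] E)
    (hCdef : ∀ t : ℝ, 0 ≤ t → ∀ f : F, C t (i f) = i (T t (f, 0)).1)
    (hCeven : ∀ t : ℝ, C (-t) = C t) :
    C 0 = 1 ∧ ∀ t s : ℝ, C (t + s) + C (t - s) = 2 • (C t ∘L C s) := by
  have hT : IsStronglyContinuousSemigroup T := ⟨hT0, hTadd, hTcont⟩
  have hdom : Dense {p : F × E | ∃ d, HasDerivWithinAt (fun t => T t p) d (Ici 0) 0} := by
    refine (hDK.prod hdense).mono ?_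
    rintro ⟨_, _⟩ ⟨hu, v, rfl⟩
    exact ⟨_, hgen ⟨_, hu⟩ v⟩
  have hRT : ∀ t, 0 ≤ t → ∀ p, T t (negSnd F E (T t p)) = negSnd F E p := fun t ht =>
    hT.apply_apply_eq_of_anticommute_of_dense
      (hasDerivWithinAt_negSnd_of_reduction i hgen hmax) hdom ht
  refine ⟨DFunLike.coe_injective <| hdense.equalizer (map_continuous _) (map_continuous _) <|
    funext fun f => by simp [hCdef 0 le_rfl f, hT.apply_zero], fun t s => ?_⟩
  have hC : Function.Even C := hCeven
  rw [hC.add_sub_eq_abs_add_abs_sub, ← hC.comp_abs t, ← hC.comp_abs s]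
  exact cosine_eq_of_nonneg i hdense hT hRT hCdef hC (abs_nonneg t) (abs_nonneg s)

/-- If the reduction matrix 𝐊 = [[0, I_F],[K, 0]] with domain D(K) × F generates a
strongly continuous semigroup (T(t)) on F × E, then the compression C(t) of T(t) to the
first coordinate (mapping f ∈ F ⊂ E to the first component of T(t)(f,0)), extended
evenly to ℝ, is a cosine operator function on E. -/
theorem compression_of_reduction_semigroup_is_cosine
    {E F : Type*}
    [NormedAddCommGroup E] [NormedSpace ℝ E] [CompleteSpace E]
    [NormedAddCommGroup F] [NormedSpace ℝ F] [CompleteSpace F]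
    -- continuous dense embedding F ↪ E
    (i : F →L[ℝ] E) (hi : Function.Injective i) (hdense : DenseRange i)
    -- the domain D(K) ⊂ F, densely embedded in F, and the operator K : D(K) → E
    (DK : Submodule ℝ F) (hDK : Dense (DK : Set F))
    (K : DK →ₗ[ℝ] E)
    -- T is a strongly continuous semigroup on F × E …
    (T : ℝ → (F × E) →L[ℝ] (F × E))
    (hT0 : T 0 = 1)
    (hTadd : ∀ t s : ℝ, 0 ≤ t → 0 ≤ s → T (t + s) = T t ∘L T s)
    (hTcont : ∀ p : F × E, ContinuousOn (fun t => T t p) (Ici 0))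
    -- … generated by the operator matrix 𝐊(u,v) = (v, Ku) with domain D(K) × F :
    (hgen : ∀ (u : DK) (v : F),
      HasDerivWithinAt (fun t => T t ((u : F), i v)) ((v : F), K u) (Ici 0) 0)
    (hmax : ∀ (p d : F × E), HasDerivWithinAt (fun t => T t p) d (Ici 0) 0 →
      ∃ (u : DK) (v : F), p = ((u : F), i v))
    -- C is the even extension of the compression of T(t) to the first coordinate
    (C : ℝ → E →L[ℝ] E)
    (hCcont : ∀ x : E, Continuous fun t => C t x)
    (hCdef : ∀ t : ℝ, 0 ≤ t → ∀ f : F, C t (i f) = i (T t (f, 0)).1)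
    (hCeven : ∀ t : ℝ, C (-t) = C t) :
    C 0 = 1 ∧ ∀ t s : ℝ, C (t + s) + C (t - s) = 2 • (C t ∘L C s) :=
  compression_of_reduction_semigroup_is_cosine_general i hdense DK hDK K T hT0 hTadd hTcont hgen
    hmax C hCdef hCeven
end

section
/- Let A : D(A) ⊂ X → X and L : D(A) → ∂X form a boundary setting with L surjective, and suppose A₀ := A restricted to ker L is closed with λ ∈ ρ(A₀). Then the restriction of L to ker(λ - A) is a bijection onto ∂X. -/
open Set

/-- Greiner's lemma (Lemma 3.2 of the paper): if λ ∈ ρ(A₀), then the restriction of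
the boundary operator L to ker(λ - A) is a bijection onto ∂X; its inverse is the
Dirichlet operator D^A_λ. -/
theorem greiner_dirichlet_operator
    {X bX : Type*}
    [NormedAddCommGroup X] [NormedSpace ℝ X] [CompleteSpace X]
    [NormedAddCommGroup bX] [NormedSpace ℝ bX] [CompleteSpace bX]
    -- A : D(A) ⊂ X → X and L : D(A) → ∂X, L surjective
    (DA : Submodule ℝ X) (A : DA →ₗ[ℝ] X) (L : DA →ₗ[ℝ] bX)
    (hLsurj : Function.Surjective L)
    -- the joint operator (A,L) is closed
    (hALclosed : IsClosed {p : X × (X × bX) |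
      ∃ u : DA, (u : X) = p.1 ∧ A u = p.2.1 ∧ L u = p.2.2})
    -- A₀ := A|_{ker L} is closed and densely defined
    (hA0closed : IsClosed {p : X × X | ∃ u : DA, L u = 0 ∧ (u : X) = p.1 ∧ A u = p.2})
    (hA0dense : Dense {x : X | ∃ u : DA, L u = 0 ∧ (u : X) = x})
    -- λ ∈ ρ(A₀): λ - A₀ is bijective from D(A₀) onto X, with bounded inverse
    (l : ℝ)
    (hsurj : ∀ v : X, ∃ u : DA, L u = 0 ∧ l • (u : X) - A u = v)
    (hinj : ∀ u : DA, L u = 0 → l • (u : X) - A u = 0 → u = 0)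
    (hbddinv : ∃ M : ℝ, ∀ u : DA, L u = 0 → ‖(u : X)‖ ≤ M * ‖l • (u : X) - A u‖) :
    -- then L restricted to ker(λ - A) is a bijection onto ∂X
    ∀ x : bX, ∃! u : DA, A u = l • (u : X) ∧ L u = x := by
  intro x
  obtain ⟨w, hw⟩ := hLsurj x
  obtain ⟨u₀, hLu₀, hu₀⟩ := hsurj (l • (w : X) - A w)
  refine ⟨w - u₀, ⟨?_, ?_⟩, ?_⟩
  · have e : l • ((w - u₀ : DA) : X) - A (w - u₀)
        = (l • (w : X) - A w) - (l • (u₀ : X) - A u₀) := by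
      push_cast
      rw [map_sub, smul_sub]
      abel
    rw [hu₀, sub_self] at e
    exact (sub_eq_zero.mp e).symm
  · rw [map_sub, hw, hLu₀, sub_zero]
  · intro v ⟨hAv, hLv⟩
    have h1 : L (v - (w - u₀)) = 0 := by
      rw [map_sub, hLv, map_sub, hw, hLu₀, sub_zero, sub_self]
    have h2 : l • ((v - (w - u₀) : DA) : X) - A (v - (w - u₀)) = 0 := by
      have e : l • ((v - (w - u₀) : DA) : X) - A (v - (w - u₀))
          = (l • (v : X) - A v) - ((l • (w : X) - A w) - (l • (u₀ : X) - A u₀)) := by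
        push_cast
        rw [map_sub, map_sub, smul_sub, smul_sub]
        abel
      rw [e, hAv, hu₀, sub_self, sub_self, sub_zero]
    have := hinj _ h1 h2
    exact sub_eq_zero.mp this
end

section
/- Let 𝒳 = X × ∂X, λ ∈ ρ(A₀), and define the operator matrices 𝒜 := [[A,0],[B,B̃]] with coupled domain D(𝒜) = {(u,x) ∈ D(A) × ∂X : Lu = x}, 𝒜_λ := [[A₀-λ, 0],[B, B_λ - λ]] with domain D(A₀) × ∂X, and ℒ_λ := [[I, -D^A_λ],[0, I]], where B_λ := B̃ + B D^A_λ. Then the factorisation 𝒜 - λ = 𝒜_λ ℒ_λ holds, i.e., for every (u,x) ∈ D(𝒜): ℒ_λ(u,x) ∈ D(𝒜_λ) and 𝒜_λ ℒ_λ (u,x) = (Au - λu, Bu + B̃x - λx). -/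
open Set

/-- The factorisation 𝒜 - λ = 𝒜_λ ℒ_λ (equation (fac) in the paper): for every
(u,x) in the coupled domain D(𝒜), the vector ℒ_λ(u,x) = (u - D^A_λ x, x) lies in
D(A₀) × ∂X and 𝒜_λ ℒ_λ(u,x) = (Au - λu, Bu + B̃x - λx). -/
theorem matrix_factorisation
    {X bX : Type*}
    [NormedAddCommGroup X] [NormedSpace ℝ X] [CompleteSpace X]
    [NormedAddCommGroup bX] [NormedSpace ℝ bX] [CompleteSpace bX]
    (DA : Submodule ℝ X) (A : DA →ₗ[ℝ] X) (L : DA →ₗ[ℝ] bX)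
    (hLsurj : Function.Surjective L)
    (B : DA →ₗ[ℝ] bX) (Bt : bX →L[ℝ] bX)
    (l : ℝ)
    -- the Dirichlet operator D^A_λ, with its lift to D(A):
    -- A D^A_λ = λ D^A_λ and L D^A_λ = I
    (Dl : bX →L[ℝ] X) (Dlift : bX →ₗ[ℝ] DA)
    (hDlift : ∀ x : bX, ((Dlift x : DA) : X) = Dl x)
    (hADl : ∀ x : bX, A (Dlift x) = l • Dl x)
    (hLDl : ∀ x : bX, L (Dlift x) = x) :
    ∀ (u : DA) (x : bX), L u = x →
      -- ℒ_λ(u,x) = (u - D^A_λ x, x) with first component in ker L = D(A₀)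
      L (u - Dlift x) = 0 ∧
      ((u - Dlift x : DA) : X) = (u : X) - Dl x ∧
      -- (A₀ - λ) applied to the first component gives (A - λ)u
      A (u - Dlift x) - l • ((u - Dlift x : DA) : X) = A u - l • (u : X) ∧
      -- B applied to the first component plus (B_λ - λ)x, with B_λ = B̃ + B D^A_λ,
      -- gives Bu + B̃x - λx
      B (u - Dlift x) + (Bt x + B (Dlift x)) - l • x = B u + Bt x - l • x := by
  intro u x h
  refine ⟨?_, ?_, ?_, ?_⟩
  · simp [map_sub, hLDl, h]
  · push_cast [hDlift]; ring
  · rw [map_sub, hADl, AddSubgroupClass.coe_sub, hDlift, smul_sub]; abel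
  · rw [map_sub]; abel
end

section
/- Let λ ∈ ρ(A₀). Then λ is an eigenvalue of the operator matrix 𝒜 = [[A,0],[B,B̃]] with coupled domain D(𝒜) = {(u,x) ∈ D(A)×∂X : Lu = x} if and only if λ is an eigenvalue of the bounded operator B_λ := B̃ + B D^A_λ on ∂X. -/
open Set

/-- Engel's spectral characterization (equation (charsp) in the paper): for
λ ∈ ρ(A₀), λ is an eigenvalue of the operator matrix 𝒜 = [[A,0],[B,B̃]] with coupled
domain iff λ is an eigenvalue of B_λ = B̃ + B D^A_λ on ∂X. -/
theorem eigenvalue_characterization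
    {X bX : Type*}
    [NormedAddCommGroup X] [NormedSpace ℝ X] [CompleteSpace X]
    [NormedAddCommGroup bX] [NormedSpace ℝ bX] [CompleteSpace bX]
    (DA : Submodule ℝ X) (A : DA →ₗ[ℝ] X) (L : DA →ₗ[ℝ] bX)
    (hLsurj : Function.Surjective L)
    (B : DA →ₗ[ℝ] bX) (Bt : bX →L[ℝ] bX)
    (l : ℝ)
    -- the Dirichlet operator D^A_λ with its lift to D(A)
    (Dl : bX →L[ℝ] X) (Dlift : bX →ₗ[ℝ] DA)
    (hDlift : ∀ x : bX, ((Dlift x : DA) : X) = Dl x)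
    (hADl : ∀ x : bX, A (Dlift x) = l • Dl x)
    (hLDl : ∀ x : bX, L (Dlift x) = x)
    -- λ ∈ ρ(A₀): λ - A₀ is bijective on D(A₀) = ker L
    (hinj : ∀ u : DA, L u = 0 → A u = l • (u : X) → u = 0)
    (hsurj : ∀ v : X, ∃ u : DA, L u = 0 ∧ l • (u : X) - A u = v) :
    -- λ ∈ Pσ(𝒜) ↔ λ ∈ Pσ(B_λ)
    ((∃ (u : DA) (x : bX), ¬(u = 0 ∧ x = 0) ∧ L u = x ∧
        A u = l • (u : X) ∧ B u + Bt x = l • x) ↔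
      (∃ x : bX, x ≠ 0 ∧ Bt x + B (Dlift x) = l • x)) := by
  constructor
  · rintro ⟨u, x, hne, hLu, hAu, hBu⟩
    have hx : x ≠ 0 := by
      rintro rfl
      exact hne ⟨hinj u hLu hAu, rfl⟩
    refine ⟨x, hx, ?_⟩
    have hw : u - Dlift x = 0 := by
      apply hinj
      · rw [map_sub, hLu, hLDl, sub_self]
      · rw [map_sub, hAu, hADl, ← hDlift]
        push_cast
        rw [smul_sub]
    have hu : u = Dlift x := by rwa [sub_eq_zero] at hw
    rw [← hu, add_comm]
    exact hBu
  · rintro ⟨x, hx, hBx⟩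
    refine ⟨Dlift x, x, ?_, hLDl x, ?_, ?_⟩
    · rintro ⟨_, rfl⟩; exact hx rfl
    · rw [hADl, hDlift]
    · rw [add_comm]; exact hBx
end

section
/- The operator matrix 𝒜 with coupled domain D(𝒜) = {(u,x) ∈ D(A) × ∂X : Lu = x} has compact resolvent if and only if A₀ has compact resolvent and ∂X is finite dimensional (assuming X is infinite dimensional). -/
open Set

/-- A continuous linear map into a finite-dimensional space is a compact operator. -/
lemma aux_compact_of_fd {E F : Type*} [NormedAddCommGroup E] [NormedSpace ℝ E]
    [NormedAddCommGroup F] [NormedSpace ℝ F] [FiniteDimensional ℝ F]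
    (f : E →L[ℝ] F) : IsCompactOperator f := by
  refine ⟨Metric.closedBall 0 ‖f‖, isCompact_closedBall 0 _, ?_⟩
  have hsub : Metric.ball (0 : E) 1 ⊆ f ⁻¹' Metric.closedBall 0 ‖f‖ := by
    intro x hx
    rw [Metric.mem_ball, dist_zero_right] at hx
    simp only [Set.mem_preimage, Metric.mem_closedBall, dist_zero_right]
    calc ‖f x‖ ≤ ‖f‖ * ‖x‖ := f.le_opNorm x
      _ ≤ ‖f‖ * 1 := mul_le_mul_of_nonneg_left hx.le (norm_nonneg f)
      _ = ‖f‖ := mul_one _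
  exact Filter.mem_of_superset (Metric.ball_mem_nhds 0 one_pos) hsub

/-- A surjective compact operator between Banach spaces has finite-dimensional target. -/
lemma aux_fd_of_compact_surj {E F : Type*} [NormedAddCommGroup E] [NormedSpace ℝ E]
    [CompleteSpace E] [NormedAddCommGroup F] [NormedSpace ℝ F] [CompleteSpace F]
    (f : E →L[ℝ] F) (hsurj : Function.Surjective f) (hc : IsCompactOperator f) :
    FiniteDimensional ℝ F := by
  obtain ⟨K, hK, hKf⟩ := hc
  obtain ⟨ε, hε, hball⟩ := Metric.mem_nhds_iff.1 hKf
  have hopen : IsOpen (f '' Metric.ball 0 ε) := (f.isOpenMap hsurj) _ Metric.isOpen_ball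
  have h0 : (0 : F) ∈ f '' Metric.ball 0 ε := ⟨0, Metric.mem_ball_self hε, map_zero f⟩
  obtain ⟨r, hr, hrsub⟩ := Metric.mem_nhds_iff.1 (hopen.mem_nhds h0)
  have hsubK : Metric.closedBall (0 : F) (r / 2) ⊆ K := by
    intro x hx
    rw [Metric.mem_closedBall] at hx
    have hx' : x ∈ Metric.ball (0 : F) r := by rw [Metric.mem_ball]; linarith
    obtain ⟨y, hy, rfl⟩ := hrsub hx'
    exact hball hy
  exact FiniteDimensional.of_isCompact_closedBall₀ ℝ (by linarith)
    (hK.of_isClosed_subset Metric.isClosed_closedBall hsubK)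

/-- Proposition 6.1 of the paper: the operator matrix 𝒜 with coupled domain has
compact resolvent if and only if A₀ has compact resolvent and ∂X is finite
dimensional (X being infinite dimensional). -/
theorem matrix_compact_resolvent_iff
    {X bX : Type*}
    [NormedAddCommGroup X] [NormedSpace ℝ X] [CompleteSpace X]
    [NormedAddCommGroup bX] [NormedSpace ℝ bX] [CompleteSpace bX]
    (hX : ¬ FiniteDimensional ℝ X)
    (DA : Submodule ℝ X) (A : DA →ₗ[ℝ] X) (L : DA →ₗ[ℝ] bX)
    (hLsurj : Function.Surjective L)
    (B : DA →ₗ[ℝ] bX) (Bt : bX →L[ℝ] bX)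
    -- B is bounded for the graph norm of (A, L)
    (hB : ∃ M : ℝ, ∀ u : DA, ‖B u‖ ≤ M * (‖(u : X)‖ + ‖A u‖ + ‖L u‖))
    -- λ ∈ ρ(A₀), with resolvent R₀ = (λ - A₀)⁻¹ ∈ L(X)
    (l : ℝ) (R₀ : X →L[ℝ] X)
    (hR₀l : ∀ u : DA, L u = 0 → R₀ (l • (u : X) - A u) = (u : X))
    (hR₀r : ∀ v : X, ∃ u : DA, L u = 0 ∧ (u : X) = R₀ v ∧ l • (u : X) - A u = v)
    -- μ ∈ ρ(𝒜), with resolvent R = (μ - 𝒜)⁻¹ ∈ L(X × ∂X)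
    (m : ℝ) (R : (X × bX) →L[ℝ] (X × bX))
    (hRl : ∀ (u : DA) (x : bX), L u = x →
      R (m • (u : X) - A u, m • x - (B u + Bt x)) = ((u : X), x))
    (hRr : ∀ p : X × bX, ∃ (u : DA) (x : bX), L u = x ∧ R p = ((u : X), x) ∧
      (m • (u : X) - A u, m • x - (B u + Bt x)) = p) :
    -- 𝒜 has compact resolvent ↔ A₀ has compact resolvent and dim ∂X < ∞
    (IsCompactOperator R ↔ IsCompactOperator R₀ ∧ FiniteDimensional ℝ bX) := by
  obtain ⟨M, hM⟩ := hB
  set M' := max M 0 with hM'def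
  have hM'0 : (0 : ℝ) ≤ M' := le_max_right _ _
  have hMle : ∀ u : DA, ‖B u‖ ≤ M' * (‖(u : X)‖ + ‖A u‖ + ‖L u‖) := fun u =>
    (hM u).trans (mul_le_mul_of_nonneg_right (le_max_left _ _) (by positivity))
  constructor
  · -- forward direction
    intro hR
    -- the second-component map is surjective and compact, so bX is finite dimensional
    have hsndc : IsCompactOperator ((ContinuousLinearMap.snd ℝ X bX).comp R) :=
      hR.clm_comp (ContinuousLinearMap.snd ℝ X bX)
    have hsndsurj : Function.Surjective ((ContinuousLinearMap.snd ℝ X bX).comp R) := by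
      intro x
      obtain ⟨u, hu⟩ := hLsurj x
      refine ⟨(m • (u : X) - A u, m • x - (B u + Bt x)), ?_⟩
      simp [ContinuousLinearMap.comp_apply, hRl u x hu]
    have hfd : FiniteDimensional ℝ bX := aux_fd_of_compact_surj _ hsndsurj hsndc
    refine ⟨?_, hfd⟩
    -- solution map for A₀
    choose S hS1 hS2 hS3 using hR₀r
    have hSuniq : ∀ (u : DA) (v : X), L u = 0 → l • (u : X) - A u = v → u = S v := by
      intro u v h0 hv
      have h1 : R₀ v = (u : X) := by rw [← hv]; exact hR₀l u h0
      exact Subtype.coe_injective (h1.symm.trans (hS2 v).symm)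
    have hSadd : ∀ v w : X, S (v + w) = S v + S w := by
      intro v w
      refine (hSuniq (S v + S w) (v + w) ?_ ?_).symm
      · rw [map_add, hS1, hS1, add_zero]
      · rw [Submodule.coe_add, map_add, smul_add]
        conv_rhs => rw [← hS3 v, ← hS3 w]
        abel
    have hSsmul : ∀ (c : ℝ) (v : X), S (c • v) = c • S v := by
      intro c v
      refine (hSuniq (c • S v) (c • v) ?_ ?_).symm
      · rw [map_smul, hS1, smul_zero]
      · rw [Submodule.coe_smul, map_smul]
        conv_rhs => rw [← hS3 v]
        rw [smul_sub, smul_comm c l]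
    have hASv : ∀ v : X, A (S v) = l • ((S v : X)) - v := by
      intro v
      have h := hS3 v
      rw [sub_eq_iff_eq_add] at h
      rw [h]
      abel
    -- the map v ↦ B (S v), bounded linear
    let N : X →ₗ[ℝ] bX :=
      { toFun := fun v => B (S v)
        map_add' := fun v w => by
          show B (S (v + w)) = B (S v) + B (S w)
          rw [hSadd, map_add]
        map_smul' := fun c v => by
          show B (S (c • v)) = c • B (S v)
          rw [hSsmul, map_smul] }
    have hNb : ∀ v : X, ‖N v‖ ≤ (M' * ((1 + |l|) * ‖R₀‖ + 1)) * ‖v‖ := by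
      intro v
      have h1 : ‖((S v : X))‖ ≤ ‖R₀‖ * ‖v‖ := by rw [hS2 v]; exact R₀.le_opNorm v
      have h2 : ‖A (S v)‖ ≤ |l| * (‖R₀‖ * ‖v‖) + ‖v‖ := by
        rw [hASv v]
        calc ‖l • ((S v : X)) - v‖ ≤ ‖l • ((S v : X))‖ + ‖v‖ := norm_sub_le _ _
          _ = |l| * ‖((S v : X))‖ + ‖v‖ := by rw [norm_smul, Real.norm_eq_abs]
          _ ≤ |l| * (‖R₀‖ * ‖v‖) + ‖v‖ := by
              gcongr
      have h3 : ‖L (S v)‖ = 0 := by rw [hS1 v, norm_zero]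
      calc ‖N v‖ = ‖B (S v)‖ := rfl
        _ ≤ M' * (‖((S v : X))‖ + ‖A (S v)‖ + ‖L (S v)‖) := hMle _
        _ ≤ M' * ((‖R₀‖ * ‖v‖) + (|l| * (‖R₀‖ * ‖v‖) + ‖v‖) + 0) := by
            refine mul_le_mul_of_nonneg_left ?_ hM'0
            rw [h3]
            gcongr
        _ = (M' * ((1 + |l|) * ‖R₀‖ + 1)) * ‖v‖ := by ring
    let Nc : X →L[ℝ] bX := N.mkContinuous _ hNb
    let T : X →L[ℝ] (X × bX) :=
      ((m - l) • R₀ + ContinuousLinearMap.id ℝ X).prod (-Nc)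
    have key : ∀ v : X, R (T v) = (((S v : X)), (0 : bX)) := by
      intro v
      have hT : T v = (m • ((S v : X)) - A (S v), m • (0 : bX) - (B (S v) + Bt 0)) := by
        have h1 : m • ((S v : X)) - A (S v) = (m - l) • R₀ v + v := by
          rw [hASv v, hS2 v, sub_smul]; abel
        have h2 : m • (0 : bX) - (B (S v) + Bt 0) = -(B (S v)) := by
          rw [map_zero, smul_zero, add_zero, zero_sub]
        rw [h1, h2]
        rfl
      rw [hT, hRl (S v) 0 (hS1 v)]
    have heq : ⇑R₀ = (⇑(ContinuousLinearMap.fst ℝ X bX) ∘ ⇑R) ∘ ⇑T := by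
      funext v
      simp only [Function.comp_apply, key v, ContinuousLinearMap.coe_fst']
      exact (hS2 v).symm
    rw [show (⇑R₀ : X → X) = (⇑(ContinuousLinearMap.fst ℝ X bX) ∘ ⇑R) ∘ ⇑T from heq]
    exact (hR.clm_comp (ContinuousLinearMap.fst ℝ X bX)).comp_clm T
  · -- backward direction
    rintro ⟨hR₀c, hfd⟩
    obtain ⟨σ, hσ⟩ := L.exists_rightInverse_of_surjective (LinearMap.range_eq_top.2 hLsurj)
    have hσap : ∀ y : bX, L (σ y) = y := fun y => LinearMap.congr_fun hσ y
    choose P xP hP1 hP2 hP3 using hRr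
    have hfst : ∀ p : X × bX, (R p).1 = (P p : X) := fun p => by rw [hP2 p]
    have hsnd : ∀ p : X × bX, (R p).2 = xP p := fun p => by rw [hP2 p]
    have hAP : ∀ p : X × bX, A (P p) = m • ((P p : X)) - p.1 := by
      intro p
      have := congrArg Prod.fst (hP3 p)
      simp only at this
      rw [← this]; abel
    -- finite-rank pieces
    let h1c : bX →L[ℝ] X := LinearMap.toContinuousLinearMap (DA.subtype.comp σ)
    let h2c : bX →L[ℝ] X := LinearMap.toContinuousLinearMap (A.comp σ)
    let e : (X × bX) →L[ℝ] bX := (ContinuousLinearMap.snd ℝ X bX).comp R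
    have hec : IsCompactOperator e := aux_compact_of_fd e
    let G : (X × bX) →L[ℝ] X :=
      (l - m) • ((ContinuousLinearMap.fst ℝ X bX).comp R) + ContinuousLinearMap.fst ℝ X bX
        + ((-l) • h1c + h2c).comp e
    have keyG : ∀ p : X × bX, R₀ (G p) = (R p).1 - h1c (e p) := by
      intro p
      set w : DA := P p - σ (xP p) with hw
      have hw0 : L w = 0 := by rw [hw, map_sub, hP1 p, hσap, sub_self]
      have hwv : l • ((w : X)) - A w = G p := by
        rw [hw, Submodule.coe_sub, map_sub, hAP p, smul_sub]
        have he : e p = xP p := hsnd p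
        have hGp : G p = (l - m) • (R p).1 + p.1 + ((-l) • h1c (xP p) + h2c (xP p)) := by
          simp only [G, ContinuousLinearMap.add_apply, ContinuousLinearMap.smul_apply,
            ContinuousLinearMap.comp_apply, ContinuousLinearMap.coe_fst', he]
        have hh1 : h1c (xP p) = ((σ (xP p) : X)) := rfl
        have hh2 : h2c (xP p) = A (σ (xP p)) := rfl
        rw [hGp, hh1, hh2, hfst p, sub_smul, neg_smul]
        abel
      rw [← hwv, hR₀l w hw0, hw, Submodule.coe_sub, hfst p]
      have hh1 : h1c (e p) = ((σ (xP p) : X)) := by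
        have he : e p = xP p := hsnd p
        rw [he]; rfl
      rw [hh1]
    -- first component of R is compact
    have hfstc : IsCompactOperator (fun p : X × bX => (R p).1) := by
      have h1 : IsCompactOperator (⇑R₀ ∘ ⇑G) := hR₀c.comp_clm G
      have h2 : IsCompactOperator (⇑h1c ∘ ⇑e) := hec.continuous_comp h1c.continuous
      have h3 : IsCompactOperator ((⇑R₀ ∘ ⇑G) + (⇑h1c ∘ ⇑e)) := h1.add h2
      have heq : (fun p : X × bX => (R p).1) = (⇑R₀ ∘ ⇑G) + (⇑h1c ∘ ⇑e) := by
        funext p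
        have := keyG p
        simp only [Pi.add_apply, Function.comp_apply]
        rw [this]; abel
      rw [heq]; exact h3
    -- assemble
    have hc1 : IsCompactOperator
        (fun p : X × bX => (((R p).1 : X), (0 : bX))) := by
      have := hfstc.continuous_comp (ContinuousLinearMap.inl ℝ X bX).continuous
      exact this
    have hc2 : IsCompactOperator
        (fun p : X × bX => ((0 : X), ((R p).2 : bX))) := by
      have h2 : IsCompactOperator (⇑(ContinuousLinearMap.inr ℝ X bX) ∘ ⇑e) :=
        hec.continuous_comp (ContinuousLinearMap.inr ℝ X bX).continuous
      have heq : (fun p : X × bX => ((0 : X), ((R p).2 : bX)))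
          = ⇑(ContinuousLinearMap.inr ℝ X bX) ∘ ⇑e := by
        funext p
        rfl
      rw [heq]; exact h2
    have hsum := hc1.add hc2
    have heqR : ⇑R = (fun p : X × bX => (((R p).1 : X), (0 : bX)))
        + (fun p : X × bX => ((0 : X), ((R p).2 : bX))) := by
      funext p
      simp only [Pi.add_apply, Prod.mk_add_mk, add_zero, zero_add]
    rw [show (⇑R : X × bX → X × bX) = _ from heqR]
    exact hsum
end

section
/- Let A₁₀ be the second derivative on L^p(0,1) with Dirichlet boundary conditions, with sine function S(t)f = (1/2)∫_{·-t}^{·+t} f̃(s) ds, and let B f := (α₀ f'(0), α₁ f'(1)) for f ∈ W^{2,p}(0,1) ∩ W^{1,p}_0(0,1). Then for t ∈ (0,1), B S(t) f = (α₀ f(t), -α₁ f(1-t)), and consequently ∫₀¹ |B S(s) f| ds ≤ (|α₀| + |α₁|) ‖f‖_{L^p(0,1)} for all f ∈ W^{2,p}(0,1) ∩ W^{1,p}_0(0,1). -/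
/-!
Differentiating `x ↦ ∫_{x-t}^{x+t} f̃` gives `f̃ (x + t) - f̃ (x - t)`. For `t ∈ (0,1)` the
points `±t` and `1 ± t` lie in the open intervals `(-1,0)`, `(0,1)`, `(1,2)`, on which `f̃` is
`f` or one of its odd reflections, hence continuous; there `f̃ (-t) = -f t` and
`f̃ (1 + t) = -f (1 - t)`, which yields the formula. For the bound, each component is
controlled pointwise, `s ↦ 1 - s` preserves `∫₀¹ ‖f‖`, and `‖f‖_{L¹} ≤ ‖f‖_{L^p}` on the
probability space `(0,1)`.
-/

open MeasureTheory Set intervalIntegral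

/-- The odd, 2-periodic extension f̃ of a function f on (0,1) to ℝ. -/
noncomputable def oddPeriodicExt (g : ℝ → ℂ) : ℝ → ℂ := fun x =>
  if Int.fract (x / 2) < 1 / 2 then g (2 * Int.fract (x / 2))
  else - g (2 - 2 * Int.fract (x / 2))

section OddPeriodicExt

variable {g : ℝ → ℂ} {x : ℝ}

theorem oddPeriodicExt_eq_of_mem_Ioo_zero_one (hx : x ∈ Ioo 0 1) :
    oddPeriodicExt g x = g x := by
  have hfract : Int.fract (x / 2) = x / 2 :=
    Int.fract_eq_self.mpr ⟨by linarith [hx.1], by linarith [hx.2]⟩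
  rw [oddPeriodicExt, hfract, if_pos (by linarith [hx.2])]
  ring_nf

theorem oddPeriodicExt_eq_neg_of_mem_Ioo_neg_one_zero (hx : x ∈ Ioo (-1) 0) :
    oddPeriodicExt g x = -g (-x) := by
  have hfract : Int.fract (x / 2) = x / 2 + 1 := by
    rw [← Int.fract_add_one]
    exact Int.fract_eq_self.mpr ⟨by linarith [hx.1], by linarith [hx.2]⟩
  rw [oddPeriodicExt, hfract, if_neg (by linarith [hx.1])]
  ring_nf

theorem oddPeriodicExt_eq_neg_of_mem_Ioo_one_two (hx : x ∈ Ioo 1 2) :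
    oddPeriodicExt g x = -g (2 - x) := by
  have hfract : Int.fract (x / 2) = x / 2 :=
    Int.fract_eq_self.mpr ⟨by linarith [hx.1], by linarith [hx.2]⟩
  rw [oddPeriodicExt, hfract, if_neg (by linarith [hx.1])]
  ring_nf

theorem measurable_oddPeriodicExt (hg : Measurable g) : Measurable (oddPeriodicExt g) := by
  have hfract : Measurable fun x : ℝ => Int.fract (x / 2) :=
    measurable_fract.comp (measurable_id.div_const 2)
  exact Measurable.ite (measurableSet_lt hfract measurable_const)
    (hg.comp (hfract.const_mul 2)) (hg.comp ((hfract.const_mul 2).const_sub 2)).neg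

theorem norm_oddPeriodicExt_le {M : ℝ} (hM : ∀ y ∈ Icc (0 : ℝ) 1, ‖g y‖ ≤ M)
    (x : ℝ) : ‖oddPeriodicExt g x‖ ≤ M := by
  have h₀ : 0 ≤ Int.fract (x / 2) := Int.fract_nonneg _
  have h₁ : Int.fract (x / 2) < 1 := Int.fract_lt_one _
  unfold oddPeriodicExt
  split_ifs with h
  · exact hM _ ⟨by linarith, by linarith⟩
  · rw [norm_neg]
    exact hM _ ⟨by linarith, by linarith⟩

theorem locallyIntegrable_oddPeriodicExt (hg : Continuous g) :
    LocallyIntegrable (oddPeriodicExt g) := by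
  obtain ⟨M, hM⟩ := isCompact_Icc.exists_bound_of_continuousOn hg.continuousOn
  exact (locallyIntegrable_const M).mono
    (measurable_oddPeriodicExt hg.measurable).aestronglyMeasurable
    (ae_of_all _ fun x => (norm_oddPeriodicExt_le hM x).trans (Real.le_norm_self M))

end OddPeriodicExt

theorem hasDerivAt_intervalIntegral_sub_add {E : Type*} [NormedAddCommGroup E]
    [NormedSpace ℝ E] [CompleteSpace E] {h : ℝ → E} (hh : LocallyIntegrable h)
    {x t : ℝ} (hadd : ContinuousAt h (x + t)) (hsub : ContinuousAt h (x - t)) :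
    HasDerivAt (fun y => ∫ s in y - t..y + t, h s) (h (x + t) - h (x - t)) x := by
  have hint : ∀ a b : ℝ, IntervalIntegrable h volume a b := fun a b =>
    intervalIntegrable_iff.mpr <|
      (hh.integrableOn_isCompact isCompact_uIcc).mono_set uIoc_subset_uIcc
  have hprim : ∀ b, ContinuousAt h b →
      HasDerivAt (fun u => ∫ s in (0 : ℝ)..u, h s) (h b) b := fun b hb =>
    integral_hasDerivAt_right (hint 0 b) hh.aestronglyMeasurable.stronglyMeasurableAtFilter hb
  have hsplit : (fun y => ∫ s in y - t..y + t, h s) =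
      fun y => (∫ s in (0 : ℝ)..y + t, h s) - ∫ s in (0 : ℝ)..y - t, h s := by
    funext y
    rw [integral_interval_sub_left (hint 0 _) (hint 0 _)]
  rw [hsplit]
  exact ((hprim _ hadd).comp_add_const x t).sub ((hprim _ hsub).comp_sub_const x t)

section SineFunction

variable {g : ℝ → ℂ} {t : ℝ}

theorem hasDerivAt_intervalIntegral_oddPeriodicExt_zero (hg : Continuous g)
    (ht : t ∈ Ioo 0 1) :
    HasDerivAt (fun y => ∫ s in y - t..y + t, oddPeriodicExt g s) (2 * g t) 0 := by
  have hneg : -t ∈ Ioo (-1 : ℝ) 0 := ⟨by linarith [ht.2], by linarith [ht.1]⟩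
  have hcpos : ContinuousAt (oddPeriodicExt g) t :=
    hg.continuousAt.congr <| Filter.eventuallyEq_of_mem (isOpen_Ioo.mem_nhds ht)
      fun y hy => (oddPeriodicExt_eq_of_mem_Ioo_zero_one hy).symm
  have hcneg : ContinuousAt (oddPeriodicExt g) (-t) :=
    (hg.comp continuous_neg).neg.continuousAt.congr <|
      Filter.eventuallyEq_of_mem (isOpen_Ioo.mem_nhds hneg)
        fun y hy => (oddPeriodicExt_eq_neg_of_mem_Ioo_neg_one_zero hy).symm
  have H := hasDerivAt_intervalIntegral_sub_add (locallyIntegrable_oddPeriodicExt hg)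
    (x := 0) (t := t) (by rwa [zero_add]) (by rwa [zero_sub])
  rwa [zero_add, zero_sub, oddPeriodicExt_eq_of_mem_Ioo_zero_one ht,
    oddPeriodicExt_eq_neg_of_mem_Ioo_neg_one_zero hneg, neg_neg, sub_neg_eq_add, ← two_mul] at H

theorem hasDerivAt_intervalIntegral_oddPeriodicExt_one (hg : Continuous g)
    (ht : t ∈ Ioo 0 1) :
    HasDerivAt (fun y => ∫ s in y - t..y + t, oddPeriodicExt g s) (-(2 * g (1 - t))) 1 := by
  have hsub : 1 - t ∈ Ioo (0 : ℝ) 1 := ⟨by linarith [ht.2], by linarith [ht.1]⟩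
  have hadd : 1 + t ∈ Ioo (1 : ℝ) 2 := ⟨by linarith [ht.1], by linarith [ht.2]⟩
  have hcsub : ContinuousAt (oddPeriodicExt g) (1 - t) :=
    hg.continuousAt.congr <| Filter.eventuallyEq_of_mem (isOpen_Ioo.mem_nhds hsub)
      fun y hy => (oddPeriodicExt_eq_of_mem_Ioo_zero_one hy).symm
  have hcadd : ContinuousAt (oddPeriodicExt g) (1 + t) :=
    (hg.comp (continuous_const.sub continuous_id)).neg.continuousAt.congr <|
      Filter.eventuallyEq_of_mem (isOpen_Ioo.mem_nhds hadd)
        fun y hy => (oddPeriodicExt_eq_neg_of_mem_Ioo_one_two hy).symm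
  have H := hasDerivAt_intervalIntegral_sub_add (locallyIntegrable_oddPeriodicExt hg) hcadd hcsub
  rwa [oddPeriodicExt_eq_of_mem_Ioo_zero_one hsub, oddPeriodicExt_eq_neg_of_mem_Ioo_one_two hadd,
    show (2 : ℝ) - (1 + t) = 1 - t by ring, ← neg_add', ← two_mul] at H

end SineFunction

theorem integral_norm_le_integral_norm_rpow_rpow {α E : Type*} [MeasurableSpace α]
    [NormedAddCommGroup E] {μ : Measure α} [IsProbabilityMeasure μ] {p : ℝ} {f : α → E}
    (hp : 1 ≤ p) (hf : MemLp f (ENNReal.ofReal p) μ) :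
    ∫ x, ‖f x‖ ∂μ ≤ (∫ x, ‖f x‖ ^ p ∂μ) ^ (1 / p) := by
  have hexp : (1 : ENNReal) ≤ ENNReal.ofReal p := by simpa using hp
  have H := eLpNorm_le_eLpNorm_of_exponent_le hexp hf.aestronglyMeasurable
  rw [(hf.mono_exponent hexp).eLpNorm_eq_integral_rpow_norm one_ne_zero ENNReal.one_ne_top,
    hf.eLpNorm_eq_integral_rpow_norm (ENNReal.ofReal_pos.mpr (by linarith)).ne'
    ENNReal.ofReal_ne_top,
    ENNReal.ofReal_le_ofReal_iff (by positivity)] at H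
  simpa [ENNReal.toReal_ofReal (by linarith : 0 ≤ p), one_div] using H

theorem integral_norm_prod_reflect_le {R : Type*} [NormedRing R] (a b : R) {f : ℝ → R}
    (hf : Continuous f) :
    ∫ s in (0 : ℝ)..1, ‖(a * f s, -(b * f (1 - s)))‖ ≤
      (‖a‖ + ‖b‖) * ∫ s in (0 : ℝ)..1, ‖f s‖ := by
  have hreflect : ∫ s in (0 : ℝ)..1, ‖f (1 - s)‖ = ∫ s in (0 : ℝ)..1, ‖f s‖ := by
    simpa using integral_comp_sub_left (a := 0) (b := 1) (fun u => ‖f u‖) 1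
  have hpair : Continuous fun s => ‖(a * f s, -(b * f (1 - s)))‖ := by fun_prop
  have hsum : Continuous fun s => ‖a‖ * ‖f s‖ + ‖b‖ * ‖f (1 - s)‖ := by fun_prop
  calc ∫ s in (0 : ℝ)..1, ‖(a * f s, -(b * f (1 - s)))‖
      ≤ ∫ s in (0 : ℝ)..1, (‖a‖ * ‖f s‖ + ‖b‖ * ‖f (1 - s)‖) := by
        refine integral_mono_on zero_le_one (hpair.intervalIntegrable _ _)
          (hsum.intervalIntegrable _ _) fun s _ => ?_
        rw [Prod.norm_def, norm_neg]
        exact max_le ((norm_mul_le _ _).trans (le_add_of_nonneg_right (by positivity)))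
          ((norm_mul_le _ _).trans (le_add_of_nonneg_left (by positivity)))
    _ = (‖a‖ + ‖b‖) * ∫ s in (0 : ℝ)..1, ‖f s‖ := by
        rw [intervalIntegral.integral_add
          ((by fun_prop : Continuous fun s => ‖a‖ * ‖f s‖).intervalIntegrable _ _)
          ((by fun_prop : Continuous fun s => ‖b‖ * ‖f (1 - s)‖).intervalIntegrable _ _),
          intervalIntegral.integral_const_mul, intervalIntegral.integral_const_mul, hreflect]
        ring

theorem BS_formula_and_bound_general
    (p : ℝ) (hp : 1 ≤ p) (α₀ α₁ : ℂ)
    (f : ℝ → ℂ) (hf : ContDiff ℝ 1 f) :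
    (∀ t ∈ Ioo (0 : ℝ) 1,
      (α₀ * deriv (fun x : ℝ =>
          (1 / 2 : ℂ) * ∫ s in x - t..x + t, oddPeriodicExt f s) 0,
        α₁ * deriv (fun x : ℝ =>
          (1 / 2 : ℂ) * ∫ s in x - t..x + t, oddPeriodicExt f s) 1)
        = (α₀ * f t, -(α₁ * f (1 - t)))) ∧
    (∫ s in (0 : ℝ)..1, ‖(α₀ * f s, -(α₁ * f (1 - s)))‖)
      ≤ (‖α₀‖ + ‖α₁‖) * (∫ x in (0 : ℝ)..1, ‖f x‖ ^ p) ^ (1 / p) := by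
  have hfc : Continuous f := hf.continuous
  refine ⟨fun t ht => ?_, ?_⟩
  · rw [((hasDerivAt_intervalIntegral_oddPeriodicExt_zero hfc ht).const_mul _).deriv,
      ((hasDerivAt_intervalIntegral_oddPeriodicExt_one hfc ht).const_mul _).deriv]
    ext <;> simp only <;> ring
  · have : IsProbabilityMeasure (volume.restrict (Ioc (0 : ℝ) 1)) := ⟨by simp⟩
    obtain ⟨M, hM⟩ := isCompact_Icc.exists_bound_of_continuousOn hfc.continuousOn
    have hLp : MemLp f (ENNReal.ofReal p) (volume.restrict (Ioc (0 : ℝ) 1)) :=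
      MemLp.of_bound hfc.aestronglyMeasurable M <|
        (ae_restrict_iff' measurableSet_Ioc).mpr <|
          ae_of_all _ fun x hx => hM x (Ioc_subset_Icc_self hx)
    have hL1Lp := integral_norm_le_integral_norm_rpow_rpow hp hLp
    rw [← integral_of_le zero_le_one, ← integral_of_le zero_le_one] at hL1Lp
    exact (integral_norm_prod_reflect_le α₀ α₁ hfc).trans (by gcongr)

/-- For the Dirichlet Laplacian on (0,1) with sine function
S(t)f = (1/2)∫_{·-t}^{·+t} f̃(s) ds and B f = (α₀ f'(0), α₁ f'(1)), one has
B S(t) f = (α₀ f(t), -α₁ f(1-t)) for t ∈ (0,1), and consequently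
∫₀¹ |B S(s) f| ds ≤ (|α₀| + |α₁|) ‖f‖_{L^p(0,1)} (condition (R) in the paper). -/
theorem BS_formula_and_bound
    (p : ℝ) (hp : 1 ≤ p) (α₀ α₁ : ℂ)
    (f : ℝ → ℂ) (hf : ContDiff ℝ 1 f) (hf0 : f 0 = 0) (hf1 : f 1 = 0) :
    (∀ t ∈ Ioo (0 : ℝ) 1,
      (α₀ * deriv (fun x : ℝ =>
          (1 / 2 : ℂ) * ∫ s in x - t..x + t, oddPeriodicExt f s) 0,
        α₁ * deriv (fun x : ℝ =>
          (1 / 2 : ℂ) * ∫ s in x - t..x + t, oddPeriodicExt f s) 1)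
        = (α₀ * f t, -(α₁ * f (1 - t)))) ∧
    (∫ s in (0 : ℝ)..1, ‖(α₀ * f s, -(α₁ * f (1 - s)))‖)
      ≤ (‖α₀‖ + ‖α₁‖) * (∫ x in (0 : ℝ)..1, ‖f x‖ ^ p) ^ (1 / p) :=
  BS_formula_and_bound_general p hp α₀ α₁ f hf
end
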